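/- arXiv:math/0307185 — 3 statements merged into one kernel-verified Lean document; each statement's English description precedes it below -/
import Mathlib

section
/- A functor M : A → Set from a category A with finite products preserves finite products if and only if the category of elements ∫_A M has finite products and the canonical projection functor P : ∫_A M → A preserves them. -/
/-!
Let `F : I ⥤ A` be a diagram and `s` a compatible family of elements `s i ∈ M (F i)`. If the lifted
diagram `i ↦ (F i, s i)` has a limit `(L, p)` in `∫ M`, its projections induce `k : L ⟶ lim F`,
and `M k p` restricts to `s`. Any other `m ∈ M (lim F)` restricting to `s` makes `(lim F, m)` a
cone over the lifted diagram, so it factors as `M u m = p` with `u ≫ k = 𝟙`, forcing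
`m = M k p`. Thus `M (lim F)` is the set of compatible families: `M` preserves the limit.
-/

open CategoryTheory CategoryTheory.Limits

namespace CategoryTheory.CategoryOfElements

universe w v u v₁ u₁

variable {C : Type u} [Category.{v} C] {M : C ⥤ Type w} {I : Type u₁} [Category.{v₁} I]

def diagramOfSection (F : I ⥤ C) (s : (F ⋙ M).sections) : I ⥤ M.Elements where
  obj i := M.elementsMk (F.obj i) (s.1 i)
  map f := ⟨F.map f, s.2 f⟩

theorem existsUnique_map_limit_π_eq (F : I ⥤ C) [HasLimit F] (s : (F ⋙ M).sections)
    [HasLimit (diagramOfSection F s)] :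
    ∃! m : M.obj (limit F), ∀ i, M.map (limit.π F i) m = s.1 i := by
  set G := diagramOfSection F s
  let k : (limit G).1 ⟶ limit F := limit.lift F ((π M).mapCone (limit.cone G))
  have k_π (i : I) : k ≫ limit.π F i = (limit.π G i).1 := limit.lift_π _ i
  refine ⟨M.map k (limit G).2, fun i => ?_, fun m hm => ?_⟩
  · rw [← Functor.map_comp_apply, k_π]
    exact (limit.π G i).2
  · let u : M.elementsMk (limit F) m ⟶ limit G := limit.lift G
      { pt := M.elementsMk (limit F) m
        π := { app i := homMk _ _ (limit.π F i) (hm i)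
               naturality := fun i j f => by
                 ext; exact (Category.id_comp _).trans (limit.w F f).symm } }
    have u_k : u.1 ≫ k = 𝟙 _ := limit.hom_ext fun i => by
      rw [Category.assoc, k_π, Category.id_comp]
      exact congrArg Subtype.val (limit.lift_π _ i : u ≫ limit.π G i = _)
    calc m = M.map (u.1 ≫ k) m := by rw [u_k, Functor.map_id_apply]
      _ = M.map k (limit G).2 := by rw [Functor.map_comp_apply, u.2]

theorem preservesLimit_of_hasLimit_diagramOfSection (F : I ⥤ C) [HasLimit F]
    [∀ s, HasLimit (diagramOfSection (M := M) F s)] : PreservesLimit F M :=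
  preservesLimit_of_preserves_limit_cone (limit.isLimit F) <|
    ((Types.isLimit_iff _).2 fun s hs => existsUnique_map_limit_π_eq F ⟨s, hs⟩).some

theorem preservesLimitsOfShape_of_hasLimitsOfShape [HasLimitsOfShape I C]
    [HasLimitsOfShape I M.Elements] : PreservesLimitsOfShape I M where
  preservesLimit {F} := preservesLimit_of_hasLimit_diagramOfSection F

end CategoryTheory.CategoryOfElements

/-- A functor `M : A ⥤ Type` from a category with finite products preserves finite
products if and only if the category of elements `∫_A M` has finite products and the
canonical projection `π : ∫_A M ⥤ A` preserves them. -/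
theorem stmt2 {A : Type} [SmallCategory A] [HasFiniteProducts A] (M : A ⥤ Type) :
    Nonempty (PreservesFiniteProducts M) ↔
      (HasFiniteProducts M.Elements ∧
        Nonempty (PreservesFiniteProducts (CategoryOfElements.π M))) := by
  constructor
  · rintro ⟨_⟩
    -- `π M` creates the limits of every shape that `M` preserves.
    exact ⟨⟨fun _ => inferInstance⟩, ⟨⟨fun _ => inferInstance⟩⟩⟩
  · rintro ⟨_, -⟩
    exact ⟨⟨fun _ => CategoryOfElements.preservesLimitsOfShape_of_hasLimitsOfShape⟩⟩
end

section
/- Let 0 → D → E →^P A → 0 be a linear extension of a category A with finite products by a natural system D: P is full, identity on objects, and each fiber P⁻¹(f) carries a transitive effective D_f-action satisfying (a + f̃)(b + g̃) = f·b + a·g + f̃g̃. Then D is cartesian if and only if E has finite products and P preserves them. -/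
/-!
The action makes each fibre of `P` over `f` a torsor under `D_f`, and composing with a lift of
`p` acts on these torsors through `p_* : D_f → D_{pf}`. So for a product fan `(p₁, p₂)` in `A`,
a fan of lifts has the universal property in `E` exactly when `D_f → D_{p₁f} × D_{p₂f}` is
bijective for every `f`; likewise a lift of a terminal object is terminal exactly when every
`D_f` into it vanishes. If `D` is cartesian this yields finite products in `E` lying over those
of `A`. Conversely, a lift of an isomorphism is an isomorphism (for invertible `f`, `f^*` is
invertible), so `P` reflects isomorphisms; preserving finite products, it then also reflects
them, lifted product fans are products in `E`, and `D` is cartesian.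
-/

open CategoryTheory CategoryTheory.Limits

universe v u

/-- An object of the Baues–Wirsching category of factorizations of a category `C`. -/
structure FactObj (C : Type u) [Category.{v} C] : Type (max u v) where
  {src : C}
  {tgt : C}
  hom : src ⟶ tgt

instance FactObj.category (C : Type u) [Category.{v} C] : Category (FactObj C) where
  Hom f g := { p : (g.src ⟶ f.src) × (f.tgt ⟶ g.tgt) // g.hom = p.1 ≫ f.hom ≫ p.2 }
  id f := ⟨(𝟙 _, 𝟙 _), by simp⟩
  comp {f g h} p q := ⟨(q.1.1 ≫ p.1.1, p.1.2 ≫ q.1.2), by simp [q.2, p.2]⟩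
  id_comp p := by apply Subtype.ext; simp
  comp_id p := by apply Subtype.ext; simp
  assoc p q r := by apply Subtype.ext; simp

/-- A natural system of abelian groups on `C`. -/
abbrev NaturalSystem (C : Type u) [Category.{v} C] : Type _ :=
  FactObj C ⥤ AddCommGrpCat.{v}

variable {C : Type u} [catA : Category.{v} C]

/-- `f ⟶ f ≫ b` in the factorization category. -/
def natPost {X Y Z : C} (f : X ⟶ Y) (b : Y ⟶ Z) :
    (FactObj.mk f) ⟶ (FactObj.mk (f ≫ b)) :=
  ⟨(𝟙 X, b), by simp⟩

/-- `f ⟶ a ≫ f` in the factorization category. -/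
def natPre {X Y Z : C} (a : X ⟶ Y) (f : Y ⟶ Z) :
    (FactObj.mk f) ⟶ (FactObj.mk (a ≫ f)) :=
  ⟨(a, 𝟙 Z), by simp⟩

/-- Cartesianness of a natural system on a category with finite products. -/
def IsCartesianNS (D : NaturalSystem C) : Prop :=
  (∀ {X T : C} (_ : IsTerminal T) (f : X ⟶ T), Subsingleton (D.obj (FactObj.mk f))) ∧
  (∀ {X P X₁ X₂ : C} (p₁ : P ⟶ X₁) (p₂ : P ⟶ X₂)
      (_ : IsLimit (BinaryFan.mk p₁ p₂)) (f : X ⟶ P),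
    Function.Bijective (fun a : D.obj (FactObj.mk f) =>
      ((D.map (natPost f p₁) a, D.map (natPost f p₂) a) :
        D.obj (FactObj.mk (f ≫ p₁)) × D.obj (FactObj.mk (f ≫ p₂)))))

section LinearExtension

/-- A wrapper for a (second) category structure on the same type of objects. -/
structure CatOn (C : Type u) : Type (max u (v + 1)) where
  cat : Category.{v} C

/-- Morphisms of a second category structure `catE` on the same objects. -/
abbrev EHom (catE : CatOn.{v} C) (X Y : C) : Type v :=
  @Quiver.Hom C (@CategoryStruct.toQuiver C (@Category.toCategoryStruct C catE.cat)) X Y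

/-- Composition in the second category structure. -/
abbrev eComp (catE : CatOn.{v} C) {X Y Z : C}
    (f : EHom catE X Y) (g : EHom catE Y Z) : EHom catE X Z :=
  @CategoryStruct.comp C (@Category.toCategoryStruct C catE.cat) X Y Z f g

/-- The object part of a functor between two category structures on `C`. -/
abbrev eObj (catE : CatOn.{v} C) (P : @Functor C catE.cat C catA) (X : C) : C :=
  @Prefunctor.obj C (@CategoryStruct.toQuiver C (@Category.toCategoryStruct C catE.cat)) C (@CategoryStruct.toQuiver C (@Category.toCategoryStruct C catA))
    (@Functor.toPrefunctor C catE.cat C catA P) X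

/-- The morphism part of a functor between two category structures on `C`. -/
abbrev eMap (catE : CatOn.{v} C) (P : @Functor C catE.cat C catA) {X Y : C}
    (ft : EHom catE X Y) : eObj catE P X ⟶ eObj catE P Y :=
  @Prefunctor.map C (@CategoryStruct.toQuiver C (@Category.toCategoryStruct C catE.cat)) C (@CategoryStruct.toQuiver C (@Category.toCategoryStruct C catA))
    (@Functor.toPrefunctor C catE.cat C catA P) X Y ft

/-- Membership of an `E`-morphism in the fiber of `P` over `f : X ⟶ Y`. -/
def inFib (catE : CatOn.{v} C) (P : @Functor C catE.cat C catA)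
    (hobj : ∀ X : C, eObj catE P X = X) {X Y : C} (f : X ⟶ Y)
    (ft : EHom catE X Y) : Prop :=
  eMap catE P ft = eqToHom (hobj X) ≫ f ≫ eqToHom (hobj Y).symm

lemma hasFiniteProducts_and_preservesFiniteProducts_of_exists {E : Type*} [Category E]
    (F : E ⥤ C) (hT : ∃ T : E, Nonempty (IsTerminal T) ∧ Nonempty (IsTerminal (F.obj T)))
    (hP : ∀ X₁ X₂ : E, ∃ (W : E) (pt₁ : W ⟶ X₁) (pt₂ : W ⟶ X₂),
      Nonempty (IsLimit (BinaryFan.mk pt₁ pt₂)) ∧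
        Nonempty (IsLimit (BinaryFan.mk (F.map pt₁) (F.map pt₂)))) :
    HasFiniteProducts E ∧ PreservesFiniteProducts F := by
  obtain ⟨T, ⟨hTE⟩, ⟨hTC⟩⟩ := hT
  choose W pt₁ pt₂ hE hC using hP
  have : HasTerminal E := hTE.hasTerminal
  have : ∀ {X₁ X₂ : E}, HasLimit (pair X₁ X₂) := HasLimit.mk ⟨_, (hE _ _).some⟩
  have : HasBinaryProducts E := hasBinaryProducts_of_hasLimit_pair E
  have : HasFiniteProducts E := hasFiniteProducts_of_has_binary_and_terminal
  have : PreservesLimit (Functor.empty.{0} E) F :=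
    preservesLimit_of_preserves_limit_cone hTE ((isLimitMapConeEmptyConeEquiv F T).symm hTC)
  have : PreservesLimitsOfShape (Discrete PEmpty.{1}) F :=
    preservesLimitsOfShape_pempty_of_preservesTerminal F
  have hpair : ∀ X₁ X₂ : E, PreservesLimit (pair X₁ X₂) F := fun X₁ X₂ =>
    preservesLimit_of_preserves_limit_cone (hE X₁ X₂).some
      ((isLimitMapConeBinaryFanEquiv F _ _).symm (hC X₁ X₂).some)
  have : PreservesLimitsOfShape (Discrete WalkingPair) F :=
    ⟨fun {K} => have := hpair (K.obj ⟨.left⟩) (K.obj ⟨.right⟩)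
      preservesLimit_of_iso_diagram F (diagramIsoPair K).symm⟩
  exact ⟨inferInstance, .of_preserves_binary_and_terminal F⟩

lemma preservesFiniteProducts_of_natIso {E D : Type*} [Category E] [Category D] {F G : E ⥤ D}
    (e : F ≅ G) [PreservesFiniteProducts F] : PreservesFiniteProducts G :=
  ⟨fun _ => preservesLimitsOfShape_of_natIso e⟩

instance isIso_natPre {X Y Z : C} (a : X ⟶ Y) [IsIso a] (f : Y ⟶ Z) : IsIso (natPre a f) :=
  ⟨⟨⟨(inv a, 𝟙 Z), by simp⟩,
    Subtype.ext (show (inv a ≫ a, 𝟙 Z ≫ 𝟙 Z) = (𝟙 Y, 𝟙 Z) by simp),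
    Subtype.ext (show (a ≫ inv a, 𝟙 Z ≫ 𝟙 Z) = (𝟙 X, 𝟙 Z) by simp)⟩⟩

namespace NaturalSystem

def natPostProd (D : NaturalSystem C) {X P X₁ X₂ : C} (f : X ⟶ P) (p₁ : P ⟶ X₁) (p₂ : P ⟶ X₂)
    (a : D.obj (FactObj.mk f)) : D.obj (FactObj.mk (f ≫ p₁)) × D.obj (FactObj.mk (f ≫ p₂)) :=
  (D.map (natPost f p₁) a, D.map (natPost f p₂) a)

lemma map_natPre_surjective (D : NaturalSystem C) {X Y Z : C} (a : X ⟶ Y) [IsIso a]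
    (f : Y ⟶ Z) : Function.Surjective (D.map (natPre a f)) :=
  (ConcreteCategory.bijective_of_isIso (D.map (natPre a f))).2

/-- A linear extension of `C` by `D` along an arbitrary functor `Q`: `act f a ft` is the paper's
`a + ft`, meaningful on the fibre `{ft | Q.map ft = f}`. -/
structure LinearExtension {E : Type*} [Category E] (Q : E ⥤ C) (D : NaturalSystem C) where
  act {X Y : E} (f : Q.obj X ⟶ Q.obj Y) : D.obj (FactObj.mk f) → (X ⟶ Y) → (X ⟶ Y)
  exists_map_eq {X Y : E} (f : Q.obj X ⟶ Q.obj Y) : ∃ ft, Q.map ft = f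
  map_act {X Y : E} {f : Q.obj X ⟶ Q.obj Y} {ft : X ⟶ Y} (a : D.obj (FactObj.mk f)) :
    Q.map ft = f → Q.map (act f a ft) = f
  zero_act {X Y : E} (f : Q.obj X ⟶ Q.obj Y) (ft : X ⟶ Y) : act f 0 ft = ft
  add_act {X Y : E} (f : Q.obj X ⟶ Q.obj Y) (a b : D.obj (FactObj.mk f)) (ft : X ⟶ Y) :
    act f (a + b) ft = act f a (act f b ft)
  exists_act_eq {X Y : E} {f : Q.obj X ⟶ Q.obj Y} {ft ft' : X ⟶ Y} :
    Q.map ft = f → Q.map ft' = f → ∃ a, act f a ft = ft'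
  eq_zero_of_act_eq {X Y : E} {f : Q.obj X ⟶ Q.obj Y} {a : D.obj (FactObj.mk f)} {ft : X ⟶ Y} :
    Q.map ft = f → act f a ft = ft → a = 0
  act_comp_act {X Y Z : E} (f : Q.obj X ⟶ Q.obj Y) (g : Q.obj Y ⟶ Q.obj Z)
    (a : D.obj (FactObj.mk f)) (b : D.obj (FactObj.mk g)) (ft : X ⟶ Y) (gt : Y ⟶ Z) :
    act f a ft ≫ act g b gt =
      act (f ≫ g) (D.map (natPost f g) a + D.map (natPre f g) b) (ft ≫ gt)

namespace LinearExtension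

variable {E : Type*} [Category E] {Q : E ⥤ C} {D : NaturalSystem C}

lemma act_comp (L : LinearExtension Q D) {X Y Z : E} (f : Q.obj X ⟶ Q.obj Y)
    (g : Q.obj Y ⟶ Q.obj Z) (a : D.obj (FactObj.mk f)) (ft : X ⟶ Y) (gt : Y ⟶ Z) :
    L.act f a ft ≫ gt = L.act (f ≫ g) (D.map (natPost f g) a) (ft ≫ gt) := by
  simpa only [L.zero_act, map_zero, add_zero] using L.act_comp_act f g a 0 ft gt

lemma comp_act (L : LinearExtension Q D) {X Y Z : E} (f : Q.obj X ⟶ Q.obj Y)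
    (g : Q.obj Y ⟶ Q.obj Z) (b : D.obj (FactObj.mk g)) (ft : X ⟶ Y) (gt : Y ⟶ Z) :
    ft ≫ L.act g b gt = L.act (f ≫ g) (D.map (natPre f g) b) (ft ≫ gt) := by
  simpa only [L.zero_act, map_zero, zero_add] using L.act_comp_act f g 0 b ft gt

lemma act_injective (L : LinearExtension Q D) {X Y : E} {f : Q.obj X ⟶ Q.obj Y} {ft : X ⟶ Y}
    (hft : Q.map ft = f) :
    Function.Injective (L.act f · ft) := by
  intro a b hab
  have : L.act f (-b + a) ft = ft := by
    simp only [L.add_act, hab, ← L.add_act, neg_add_cancel, L.zero_act]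
  exact (neg_add_eq_zero.mp (L.eq_zero_of_act_eq hft this)).symm

/-- Since `natPre f g` is invertible, any element of the fibre over `f ≫ g` is reached by acting on
the second factor only. -/
lemma exists_comp_eq_of_isIso (L : LinearExtension Q D) {X Y Z : E} {f : Q.obj X ⟶ Q.obj Y}
    [IsIso f] (g : Q.obj Y ⟶ Q.obj Z) {ft : X ⟶ Y} {xt : X ⟶ Z} (hft : Q.map ft = f)
    (hxt : Q.map xt = f ≫ g) : ∃ gt, Q.map gt = g ∧ ft ≫ gt = xt := by
  obtain ⟨gt, hgt⟩ := L.exists_map_eq g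
  obtain ⟨c, hc⟩ := L.exists_act_eq (by rw [Q.map_comp, hft, hgt]) hxt
  obtain ⟨b, rfl⟩ := D.map_natPre_surjective f g c
  exact ⟨L.act g b gt, L.map_act b hgt, by rw [L.comp_act f, hc]⟩

lemma isIso_of_isIso_map (L : LinearExtension Q D) {X Y : E} (ft : X ⟶ Y) [IsIso (Q.map ft)] :
    IsIso ft := by
  obtain ⟨k, hk, hftk⟩ :=
    L.exists_comp_eq_of_isIso (inv (Q.map ft)) (ft := ft) rfl (xt := 𝟙 X) (by simp)
  obtain ⟨k', -, hkk'⟩ := L.exists_comp_eq_of_isIso (inv (inv (Q.map ft))) hk (xt := 𝟙 Y) (by simp)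
  have : ft = k' := by rw [← Category.comp_id ft, ← hkk', ← Category.assoc, hftk, Category.id_comp]
  exact ⟨k, hftk, this ▸ hkk'⟩

lemma reflectsIsomorphisms (L : LinearExtension Q D) : Q.ReflectsIsomorphisms :=
  ⟨fun ft _ => L.isIso_of_isIso_map ft⟩

lemma nonempty_isTerminal_iff (L : LinearExtension Q D) {T : E} (hT : IsTerminal (Q.obj T)) :
    Nonempty (IsTerminal T) ↔
      ∀ {X : E} (f : Q.obj X ⟶ Q.obj T), Subsingleton (D.obj (FactObj.mk f)) := by
  constructor
  · rintro ⟨hTE⟩ X f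
    obtain ⟨ft, hft⟩ := L.exists_map_eq f
    have : Subsingleton (X ⟶ T) := ⟨hTE.hom_ext⟩
    exact (L.act_injective hft).subsingleton
  · intro hD
    choose lift hlift using fun X : E => L.exists_map_eq (hT.from (Q.obj X))
    refine ⟨IsTerminal.ofUniqueHom lift fun X m => ?_⟩
    obtain ⟨a, ha⟩ := L.exists_act_eq (hT.hom_ext _ _) (hlift X) (ft := m)
    rwa [Subsingleton.elim a 0, L.zero_act] at ha

section BinaryFan

variable {W X₁ X₂ : E} {pt₁ : W ⟶ X₁} {pt₂ : W ⟶ X₂}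

lemma bijective_natPostProd_of_isLimit (L : LinearExtension Q D)
    (hA : IsLimit (BinaryFan.mk (Q.map pt₁) (Q.map pt₂)))
    (hE : IsLimit (BinaryFan.mk pt₁ pt₂)) {X : E} (f : Q.obj X ⟶ Q.obj W) :
    Function.Bijective (D.natPostProd f (Q.map pt₁) (Q.map pt₂)) := by
  obtain ⟨ft, hft⟩ := L.exists_map_eq f
  have hft₁ : Q.map (ft ≫ pt₁) = f ≫ Q.map pt₁ := by rw [Q.map_comp, hft]
  have hft₂ : Q.map (ft ≫ pt₂) = f ≫ Q.map pt₂ := by rw [Q.map_comp, hft]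
  constructor
  · intro a b hab
    have h₁ : L.act f a ft ≫ pt₁ = L.act f b ft ≫ pt₁ := by
      rw [L.act_comp _ (Q.map pt₁), L.act_comp _ (Q.map pt₁)]
      exact congrArg (L.act _ · _) (congrArg Prod.fst hab)
    have h₂ : L.act f a ft ≫ pt₂ = L.act f b ft ≫ pt₂ := by
      rw [L.act_comp _ (Q.map pt₂), L.act_comp _ (Q.map pt₂)]
      exact congrArg (L.act _ · _) (congrArg Prod.snd hab)
    exact L.act_injective hft (BinaryFan.IsLimit.hom_ext hE h₁ h₂)
  · rintro ⟨a₁, a₂⟩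
    obtain ⟨g, hg₁, hg₂⟩ := BinaryFan.IsLimit.lift' hE
      (L.act _ a₁ (ft ≫ pt₁)) (L.act _ a₂ (ft ≫ pt₂))
    have hg₁' : Q.map g ≫ Q.map pt₁ = f ≫ Q.map pt₁ := by
      rw [← Q.map_comp]; exact (congrArg Q.map hg₁).trans (L.map_act a₁ hft₁)
    have hg₂' : Q.map g ≫ Q.map pt₂ = f ≫ Q.map pt₂ := by
      rw [← Q.map_comp]; exact (congrArg Q.map hg₂).trans (L.map_act a₂ hft₂)
    obtain ⟨c, rfl⟩ := L.exists_act_eq hft (BinaryFan.IsLimit.hom_ext hA hg₁' hg₂')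
    refine ⟨c, Prod.ext ?_ ?_⟩
    · exact L.act_injective hft₁ ((L.act_comp _ _ c ft pt₁).symm.trans hg₁)
    · exact L.act_injective hft₂ ((L.act_comp _ _ c ft pt₂).symm.trans hg₂)

lemma exists_lift_of_surjective_natPostProd (L : LinearExtension Q D)
    (hA : IsLimit (BinaryFan.mk (Q.map pt₁) (Q.map pt₂)))
    (hD : ∀ {X : E} (f : Q.obj X ⟶ Q.obj W),
      Function.Surjective (D.natPostProd f (Q.map pt₁) (Q.map pt₂)))
    {X : E} (x₁ : X ⟶ X₁) (x₂ : X ⟶ X₂) : ∃ u, u ≫ pt₁ = x₁ ∧ u ≫ pt₂ = x₂ := by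
  obtain ⟨f, hf₁, hf₂⟩ : ∃ f : Q.obj X ⟶ Q.obj W,
      f ≫ Q.map pt₁ = Q.map x₁ ∧ f ≫ Q.map pt₂ = Q.map x₂ :=
    ⟨_, (BinaryFan.IsLimit.lift' hA (Q.map x₁) (Q.map x₂)).2⟩
  obtain ⟨ft, hft⟩ := L.exists_map_eq f
  obtain ⟨a₁, ha₁⟩ := L.exists_act_eq (ft := ft ≫ pt₁) (by rw [Q.map_comp, hft]) hf₁.symm
  obtain ⟨a₂, ha₂⟩ := L.exists_act_eq (ft := ft ≫ pt₂) (by rw [Q.map_comp, hft]) hf₂.symm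
  obtain ⟨a, ha⟩ := hD f (a₁, a₂)
  refine ⟨L.act f a ft, ?_, ?_⟩
  · rw [L.act_comp _ (Q.map pt₁), ← ha₁]
    exact congrArg (L.act _ · _) (congrArg Prod.fst ha)
  · rw [L.act_comp _ (Q.map pt₂), ← ha₂]
    exact congrArg (L.act _ · _) (congrArg Prod.snd ha)

lemma hom_ext_of_injective_natPostProd (L : LinearExtension Q D)
    (hA : IsLimit (BinaryFan.mk (Q.map pt₁) (Q.map pt₂))) {X : E} {u u' : X ⟶ W}
    (hD : Function.Injective (D.natPostProd (Q.map u) (Q.map pt₁) (Q.map pt₂)))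
    (h₁ : u ≫ pt₁ = u' ≫ pt₁) (h₂ : u ≫ pt₂ = u' ≫ pt₂) : u = u' := by
  have e₁ : Q.map u' ≫ Q.map pt₁ = Q.map u ≫ Q.map pt₁ := by simp only [← Q.map_comp, h₁]
  have e₂ : Q.map u' ≫ Q.map pt₂ = Q.map u ≫ Q.map pt₂ := by simp only [← Q.map_comp, h₂]
  obtain ⟨c, rfl⟩ := L.exists_act_eq rfl (BinaryFan.IsLimit.hom_ext hA e₁ e₂)
  have hc₁ : D.map (natPost (Q.map u) (Q.map pt₁)) c = 0 :=
    L.eq_zero_of_act_eq (Q.map_comp u pt₁) (by rw [← L.act_comp, h₁])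
  have hc₂ : D.map (natPost (Q.map u) (Q.map pt₂)) c = 0 :=
    L.eq_zero_of_act_eq (Q.map_comp u pt₂) (by rw [← L.act_comp, h₂])
  have hc : c = 0 := hD (Prod.ext (hc₁.trans (map_zero _).symm) (hc₂.trans (map_zero _).symm))
  rw [hc, L.zero_act]

lemma nonempty_isLimit_binaryFan_iff (L : LinearExtension Q D)
    (hA : IsLimit (BinaryFan.mk (Q.map pt₁) (Q.map pt₂))) :
    Nonempty (IsLimit (BinaryFan.mk pt₁ pt₂)) ↔ ∀ {X : E} (f : Q.obj X ⟶ Q.obj W),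
      Function.Bijective (D.natPostProd f (Q.map pt₁) (Q.map pt₂)) := by
  refine ⟨fun ⟨hE⟩ _ => L.bijective_natPostProd_of_isLimit hA hE, fun hD => ?_⟩
  choose lift lift_fst lift_snd using
    fun X (x₁ : X ⟶ X₁) x₂ => L.exists_lift_of_surjective_natPostProd hA (fun f => (hD f).2) x₁ x₂
  exact ⟨BinaryFan.IsLimit.mk _ (lift _) (lift_fst _) (lift_snd _) fun x₁ x₂ m h₁ h₂ =>
    L.hom_ext_of_injective_natPostProd hA (hD _).1
      (h₁.trans (lift_fst _ x₁ x₂).symm) (h₂.trans (lift_snd _ x₁ x₂).symm)⟩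

end BinaryFan

lemma exists_isLimit_map_binaryFan [HasBinaryProducts C] (L : LinearExtension Q D)
    (hQ : Function.Surjective Q.obj) (X₁ X₂ : E) : ∃ (W : E) (pt₁ : W ⟶ X₁) (pt₂ : W ⟶ X₂),
      Nonempty (IsLimit (BinaryFan.mk (Q.map pt₁) (Q.map pt₂))) := by
  obtain ⟨W, hW⟩ := hQ (Q.obj X₁ ⨯ Q.obj X₂)
  obtain ⟨pt₁, hpt₁⟩ := L.exists_map_eq (eqToHom hW ≫ prod.fst)
  obtain ⟨pt₂, hpt₂⟩ := L.exists_map_eq (eqToHom hW ≫ prod.snd)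
  refine ⟨W, pt₁, pt₂, ⟨(prodIsProd _ _).ofIsoLimit ?_⟩⟩
  exact BinaryFan.ext (eqToIso hW.symm) (by simp [hpt₁]) (by simp [hpt₂])

lemma isCartesianNS_of_preservesFiniteProducts [HasFiniteProducts E] [PreservesFiniteProducts Q]
    (L : LinearExtension Q D) (hQ : Function.Surjective Q.obj) : IsCartesianNS D := by
  have := L.reflectsIsomorphisms
  constructor
  · intro X T hT f
    obtain ⟨X, rfl⟩ := hQ X
    obtain ⟨T, rfl⟩ := hQ T
    exact (L.nonempty_isTerminal_iff hT).1 ⟨hT.isTerminalOfObj Q T⟩ f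
  · intro X W X₁ X₂ p₁ p₂ hl f
    obtain ⟨X, rfl⟩ := hQ X
    obtain ⟨W, rfl⟩ := hQ W
    obtain ⟨X₁, rfl⟩ := hQ X₁
    obtain ⟨X₂, rfl⟩ := hQ X₂
    obtain ⟨pt₁, rfl⟩ := L.exists_map_eq p₁
    obtain ⟨pt₂, rfl⟩ := L.exists_map_eq p₂
    exact (L.nonempty_isLimit_binaryFan_iff hl).1 ⟨isLimitOfReflectsOfMapIsLimit Q pt₁ pt₂ hl⟩ f

theorem isCartesianNS_iff [HasFiniteProducts C] (L : LinearExtension Q D)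
    (hQ : Function.Surjective Q.obj) :
    IsCartesianNS D ↔ HasFiniteProducts E ∧ PreservesFiniteProducts Q := by
  refine ⟨fun ⟨hD₁, hD₂⟩ => hasFiniteProducts_and_preservesFiniteProducts_of_exists Q ?_ ?_,
    fun ⟨_, _⟩ => L.isCartesianNS_of_preservesFiniteProducts hQ⟩
  · obtain ⟨T, hT⟩ := hQ (⊤_ C)
    have hTC : IsTerminal (Q.obj T) := terminalIsTerminal.ofIso (eqToIso hT.symm)
    exact ⟨T, (L.nonempty_isTerminal_iff hTC).2 (hD₁ hTC), ⟨hTC⟩⟩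
  · intro X₁ X₂
    obtain ⟨W, pt₁, pt₂, ⟨hl⟩⟩ := L.exists_isLimit_map_binaryFan hQ X₁ X₂
    exact ⟨W, pt₁, pt₂, (L.nonempty_isLimit_binaryFan_iff hl).2 (hD₂ _ _ hl), ⟨hl⟩⟩

end LinearExtension

end NaturalSystem

def CatOn.Carrier (_ : CatOn.{v} C) : Type u := C

instance (catE : CatOn.{v} C) : Category.{v} catE.Carrier := catE.cat

/-- `P` with its object map replaced by the identity, so that its fibres lie over morphisms of `C`
itself, as in `inFib`. -/
def CatOn.straighten (catE : CatOn.{v} C) (P : @Functor C catE.cat C catA)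
    (hobj : ∀ X : C, eObj catE P X = X) : catE.Carrier ⥤ C :=
  Functor.copyObj (C := catE.Carrier) P (fun X => X) fun X => eqToIso (hobj X)

lemma inFib_iff_straighten_map_eq (catE : CatOn.{v} C) (P : @Functor C catE.cat C catA)
    (hobj : ∀ X : C, eObj catE P X = X) {X Y : C} (f : X ⟶ Y) (ft : EHom catE X Y) :
    inFib catE P hobj f ft ↔ (catE.straighten P hobj).map ft = f := by
  change _ = _ ↔ eqToHom (hobj X).symm ≫ eMap catE P ft ≫ eqToHom (hobj Y) = f
  constructor
  · intro h; rw [h]; simp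
  · intro h
    rw [← h]
    simp only [Category.assoc, eqToHom_trans_assoc, eqToHom_trans, eqToHom_refl, Category.comp_id,
      Category.id_comp]

/-- **Linear extensions of categories and cartesian natural systems.**
Let `0 → D → E →^P A → 0` be a linear extension of a category `A` with finite
products by a natural system `D`: `P` is identity on objects and full, each fiber
`P⁻¹(f)` carries a transitive and effective action of the abelian group `D_f`, and
`(a + f̃) ≫ (b + g̃) = (g·a + f·b) + f̃ ≫ g̃` holds.  Then `D` is cartesian if and
only if `E` has finite products and `P` preserves them. -/
theorem stmt11 [HasFiniteProducts C] (catE : CatOn.{v} C)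
    (P : @Functor C catE.cat C catA)
    (hobj : ∀ X : C, eObj catE P X = X)
    (D : NaturalSystem C)
    (act : ∀ {X Y : C} (f : X ⟶ Y),
      D.obj (FactObj.mk f) → EHom catE X Y → EHom catE X Y)
    (hfull : ∀ {X Y : C} (f : X ⟶ Y), ∃ ft, inFib catE P hobj f ft)
    (hact_mem : ∀ {X Y : C} (f : X ⟶ Y) (a : D.obj (FactObj.mk f)) (ft : EHom catE X Y),
      inFib catE P hobj f ft → inFib catE P hobj f (act f a ft))
    (hact_zero : ∀ {X Y : C} (f : X ⟶ Y) (ft : EHom catE X Y), act f 0 ft = ft)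
    (hact_add : ∀ {X Y : C} (f : X ⟶ Y) (a b : D.obj (FactObj.mk f))
      (ft : EHom catE X Y), act f (a + b) ft = act f a (act f b ft))
    (htrans : ∀ {X Y : C} (f : X ⟶ Y) (ft ft' : EHom catE X Y),
      inFib catE P hobj f ft → inFib catE P hobj f ft' → ∃ a, act f a ft = ft')
    (hfree : ∀ {X Y : C} (f : X ⟶ Y) (a : D.obj (FactObj.mk f)) (ft : EHom catE X Y),
      inFib catE P hobj f ft → act f a ft = ft → a = 0)
    (hcompat : ∀ {X Y Z : C} (f : X ⟶ Y) (g : Y ⟶ Z)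
      (a : D.obj (FactObj.mk f)) (b : D.obj (FactObj.mk g))
      (ft : EHom catE X Y) (gt : EHom catE Y Z),
      eComp catE (act f a ft) (act g b gt) =
        act (f ≫ g) (D.map (natPost f g) a + D.map (natPre f g) b) (eComp catE ft gt)) :
    IsCartesianNS D ↔
      (@HasFiniteProducts C catE.cat ∧
        Nonempty (@PreservesFiniteProducts C catE.cat C catA P)) := by
  have hfib : ∀ {X Y : C} (f : X ⟶ Y) (ft : EHom catE X Y),
      inFib catE P hobj f ft ↔ (catE.straighten P hobj).map ft = f :=
    inFib_iff_straighten_map_eq catE P hobj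
  let L : NaturalSystem.LinearExtension (catE.straighten P hobj) D :=
    { act := act
      exists_map_eq := fun f => (hfull f).imp fun _ => (hfib _ _).1
      map_act := fun a hft => (hfib _ _).1 (hact_mem _ a _ ((hfib _ _).2 hft))
      zero_act := hact_zero
      add_act := hact_add
      exists_act_eq := fun hft hft' => htrans _ _ _ ((hfib _ _).2 hft) ((hfib _ _).2 hft')
      eq_zero_of_act_eq := fun hft => hfree _ _ _ ((hfib _ _).2 hft)
      act_comp_act := hcompat }
  have e : (P : catE.Carrier ⥤ C) ≅ catE.straighten P hobj :=
    Functor.isoCopyObj (C := catE.Carrier) _ _ _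
  rw [L.isCartesianNS_iff fun X => ⟨X, rfl⟩]
  exact and_congr_right fun _ =>
    ⟨fun _ => ⟨preservesFiniteProducts_of_natIso (E := catE.Carrier) e.symm⟩,
      fun ⟨h⟩ => @preservesFiniteProducts_of_natIso catE.Carrier _ _ _ _ _ e h⟩
end LinearExtension
end

section
/- Let A be a theory (small category with finite products) and M a model of A (product-preserving functor A → Set). The functor Der(M;−) on the category Ab(A-mod/M) of abelian group objects over M, assigning to p : B → M the abelian group of sections s : M → B of p in A-mod, is representable: there exists an object Ω¹_M of Ab(A-mod/M) with Der(M;B) ≅ Hom(Ω¹_M, B) naturally in B. -/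
/-!
`Ω¹_M` is built fibrewise over the points of `M`. The fibre over `n ∈ M(b)` is the free abelian
group on formal symbols `g_*(dm, 0_k)`, for `g : a ⨯ c ⟶ b` with `M(g)(m, k) = n`, modulo every
relation that holds in every abelian group object `B` over `M` under every derivation `s`, where
the symbol is evaluated to `B(g)(s(m), 0_k)`. So two elements of `Ω¹_M` are equal as soon as all
derivations agree on them; this makes functoriality, the product decomposition
`Ω¹_M(b₁ ⨯ b₂) ≅ Ω¹_M(b₁) × Ω¹_M(b₂)` and the group laws formal, and a derivation `s` induces
`Ω¹_M ⟶ B` by evaluation. Conversely, a morphism of group objects `φ : Ω¹_M ⟶ B` is determined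
by `φ ∘ d`: the symbol `g_*(dm, 0_k)` is the image under `g` of the symbol over `(m, k)` with
`g = 𝟙`, which the product decomposition identifies with `(dm, 0)`.
-/

open CategoryTheory CategoryTheory.Limits

/-- The category `A-mod` of models of a theory `A` (a small category with finite
products): product-preserving functors `A ⥤ Type`. -/
abbrev AMod (A : Type) [SmallCategory A] [HasFiniteProducts A] : Type 1 :=
  ObjectProperty.FullSubcategory (fun F : A ⥤ Type => Nonempty (PreservesFiniteProducts F))

universe v u

/-- An abelian group object in a category `𝒟`, described via its functor of points:
an object `pt` with natural abelian group structures on all `Hom(T, pt)`. -/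
structure AbGroupObject (𝒟 : Type u) [Category.{v} 𝒟] where
  pt : 𝒟
  add : ∀ {T : 𝒟}, (T ⟶ pt) → (T ⟶ pt) → (T ⟶ pt)
  zero : ∀ T : 𝒟, (T ⟶ pt)
  neg : ∀ {T : 𝒟}, (T ⟶ pt) → (T ⟶ pt)
  add_assoc : ∀ {T : 𝒟} (f g h : T ⟶ pt), add (add f g) h = add f (add g h)
  add_comm : ∀ {T : 𝒟} (f g : T ⟶ pt), add f g = add g f
  zero_add : ∀ {T : 𝒟} (f : T ⟶ pt), add (zero T) f = f
  neg_add_cancel : ∀ {T : 𝒟} (f : T ⟶ pt), add (neg f) f = zero T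
  add_natural : ∀ {T T' : 𝒟} (h : T ⟶ T') (f g : T' ⟶ pt),
    h ≫ add f g = add (h ≫ f) (h ≫ g)
  zero_natural : ∀ {T T' : 𝒟} (h : T ⟶ T'), h ≫ zero T' = zero T

/-- Morphisms of abelian group objects: morphisms compatible with the addition. -/
def AbHom {𝒟 : Type u} [Category.{v} 𝒟] (B B' : AbGroupObject 𝒟) : Type _ :=
  { φ : B.pt ⟶ B'.pt //
    ∀ {T : 𝒟} (f g : T ⟶ B.pt), B.add f g ≫ φ = B'.add (f ≫ φ) (g ≫ φ) }

/-- Composition of morphisms of abelian group objects. -/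
def AbHom.comp {𝒟 : Type u} [Category.{v} 𝒟] {B₁ B₂ B₃ : AbGroupObject 𝒟}
    (φ : AbHom B₁ B₂) (ψ : AbHom B₂ B₃) : AbHom B₁ B₃ :=
  ⟨φ.1 ≫ ψ.1, fun f g => by
    rw [← Category.assoc, φ.2, ψ.2, Category.assoc, Category.assoc]⟩

namespace AbGroupObject

variable {𝒟 : Type u} [Category.{v} 𝒟] (B : AbGroupObject 𝒟)

instance (T : 𝒟) : Add (T ⟶ B.pt) := ⟨B.add⟩

instance (T : 𝒟) : Zero (T ⟶ B.pt) := ⟨B.zero T⟩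

instance (T : 𝒟) : Neg (T ⟶ B.pt) := ⟨B.neg⟩

instance (T : 𝒟) : AddCommGroup (T ⟶ B.pt) where
  add_assoc := B.add_assoc
  zero_add := B.zero_add
  add_zero f := (B.add_comm f _).trans (B.zero_add f)
  add_comm := B.add_comm
  neg_add_cancel := B.neg_add_cancel
  nsmul := nsmulRec
  zsmul := zsmulRec

theorem add_eq {T : 𝒟} (f g : T ⟶ B.pt) : B.add f g = f + g := rfl

theorem zero_eq (T : 𝒟) : B.zero T = 0 := rfl

variable {B} in
theorem comp_add {T T' : 𝒟} (χ : T ⟶ T') (f g : T' ⟶ B.pt) : χ ≫ (f + g) = χ ≫ f + χ ≫ g :=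
  B.add_natural χ f g

variable {B} in
theorem comp_zero {T T' : 𝒟} (χ : T ⟶ T') : χ ≫ (0 : T' ⟶ B.pt) = 0 :=
  B.zero_natural χ

def precomp {T T' : 𝒟} (χ : T ⟶ T') : (T' ⟶ B.pt) →+ (T ⟶ B.pt) :=
  AddMonoidHom.mk' (χ ≫ ·) (comp_add χ)

@[simp] theorem precomp_apply {T T' : 𝒟} (χ : T ⟶ T') (f : T' ⟶ B.pt) :
    B.precomp χ f = χ ≫ f :=
  rfl

def ofIsTerminal {X : 𝒟} (hX : IsTerminal X) : AbGroupObject 𝒟 where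
  pt := X
  add f _ := f
  zero T := hX.from T
  neg f := f
  add_assoc _ _ _ := hX.hom_ext _ _
  add_comm _ _ := hX.hom_ext _ _
  zero_add _ := hX.hom_ext _ _
  neg_add_cancel _ := hX.hom_ext _ _
  add_natural _ _ _ := hX.hom_ext _ _
  zero_natural _ := hX.hom_ext _ _

end AbGroupObject

namespace AbHom

variable {𝒟 : Type u} [Category.{v} 𝒟] {B B' : AbGroupObject 𝒟}

def postcomp (φ : AbHom B B') (T : 𝒟) : (T ⟶ B.pt) →+ (T ⟶ B'.pt) :=
  AddMonoidHom.mk' (· ≫ φ.1) φ.2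

theorem add_comp (φ : AbHom B B') {T : 𝒟} (f g : T ⟶ B.pt) :
    (f + g) ≫ φ.1 = f ≫ φ.1 + g ≫ φ.1 :=
  φ.2 f g

theorem zero_comp (φ : AbHom B B') (T : 𝒟) : B.zero T ≫ φ.1 = B'.zero T :=
  map_zero (φ.postcomp T)

def add (φ φ' : AbHom B B') : AbHom B B' :=
  ⟨φ.1 + φ'.1, fun f g => by
    change (f + g) ≫ (φ.1 + φ'.1) = f ≫ (φ.1 + φ'.1) + g ≫ (φ.1 + φ'.1)
    rw [AbGroupObject.comp_add, AbGroupObject.comp_add, AbGroupObject.comp_add, φ.add_comp,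
      φ'.add_comp]
    exact add_add_add_comm _ _ _ _⟩

end AbHom

noncomputable section

namespace ModelDifferentials

section ProductsOfPoints

variable {A : Type} [SmallCategory A] [HasFiniteProducts A] (F : A ⥤ Type)

theorem binaryProductIso_prodComparison_apply {a c : A} (x : F.obj (a ⨯ c)) :
    (Types.binaryProductIso _ _).hom (prodComparison F a c x) =
      (F.map prod.fst x, F.map prod.snd x) := by
  ext
  · rw [Types.binaryProductIso_hom_comp_fst_apply]
    exact types_congr_hom (prodComparison_fst F a c) x
  · rw [Types.binaryProductIso_hom_comp_snd_apply]
    exact types_congr_hom (prodComparison_snd F a c) x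

theorem preservesFiniteProducts_of_bijective
    (hprod : ∀ a c : A,
      Function.Bijective fun x : F.obj (a ⨯ c) => (F.map prod.fst x, F.map prod.snd x))
    [Unique (F.obj (⊤_ A))] : PreservesFiniteProducts F := by
  have : ∀ {a c : A}, IsIso (prodComparison F a c) := fun {a c} => by
    rw [isIso_iff_bijective]
    have h := hprod a c
    simp only [← binaryProductIso_prodComparison_apply] at h
    exact (Function.Bijective.of_comp_iff' (Types.binaryProductIso _ _).toEquiv.bijective _).1 h
  have := preservesBinaryProducts_of_isIso_prodComparison F
  have := preservesTerminal_of_iso F ((Equiv.ofUnique _ PUnit).toIso ≪≫ Types.terminalIso.symm)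
  have := preservesLimitsOfShape_pempty_of_preservesTerminal F
  exact .of_preserves_binary_and_terminal F

variable [PreservesFiniteProducts F]

theorem bijective_map_fst_map_snd (a c : A) :
    Function.Bijective fun x : F.obj (a ⨯ c) => (F.map prod.fst x, F.map prod.snd x) := by
  simp only [← binaryProductIso_prodComparison_apply]
  exact (Types.binaryProductIso _ _).toEquiv.bijective.comp
    ((isIso_iff_bijective _).1 inferInstance)

def prodEquiv (a c : A) : F.obj (a ⨯ c) ≃ F.obj a × F.obj c :=
  .ofBijective _ (bijective_map_fst_map_snd F a c)

def prodMk {a c : A} (u : F.obj a) (v : F.obj c) : F.obj (a ⨯ c) :=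
  (prodEquiv F a c).symm (u, v)

@[simp] theorem map_fst_prodMk {a c : A} (u : F.obj a) (v : F.obj c) :
    F.map prod.fst (prodMk F u v) = u :=
  congrArg Prod.fst ((prodEquiv F a c).apply_symm_apply (u, v))

@[simp] theorem map_snd_prodMk {a c : A} (u : F.obj a) (v : F.obj c) :
    F.map prod.snd (prodMk F u v) = v :=
  congrArg Prod.snd ((prodEquiv F a c).apply_symm_apply (u, v))

theorem prod_ext {a c : A} {x y : F.obj (a ⨯ c)} (h₁ : F.map prod.fst x = F.map prod.fst y)
    (h₂ : F.map prod.snd x = F.map prod.snd y) : x = y :=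
  (prodEquiv F a c).injective (Prod.ext h₁ h₂)

theorem eq_prodMk {a c : A} {x : F.obj (a ⨯ c)} {u : F.obj a} {v : F.obj c}
    (h₁ : F.map prod.fst x = u) (h₂ : F.map prod.snd x = v) : x = prodMk F u v :=
  prod_ext F (by simpa using h₁) (by simpa using h₂)

instance : Unique (F.obj (⊤_ A)) :=
  (PreservesTerminal.iso F ≪≫ Types.terminalIso).toEquiv.unique

theorem map_prod_lift {x a c : A} (f : x ⟶ a) (g : x ⟶ c) (t : F.obj x) :
    F.map (prod.lift f g) t = prodMk F (F.map f t) (F.map g t) :=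
  eq_prodMk F (by rw [← F.map_comp_apply, prod.lift_fst])
    (by rw [← F.map_comp_apply, prod.lift_snd])

theorem map_prod_map {a c a' c' : A} (f : a ⟶ a') (g : c ⟶ c') (u : F.obj a) (v : F.obj c) :
    F.map (prod.map f g) (prodMk F u v) = prodMk F (F.map f u) (F.map g v) :=
  eq_prodMk F (by rw [← F.map_comp_apply, prod.map_fst, F.map_comp_apply, map_fst_prodMk])
    (by rw [← F.map_comp_apply, prod.map_snd, F.map_comp_apply, map_snd_prodMk])

theorem app_prodMk {G : A ⥤ Type} [PreservesFiniteProducts G] (τ : F ⟶ G) {a c : A}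
    (u : F.obj a) (v : F.obj c) : τ.app _ (prodMk F u v) = prodMk G (τ.app a u) (τ.app c v) :=
  eq_prodMk G (by rw [← NatTrans.naturality_apply, map_fst_prodMk])
    (by rw [← NatTrans.naturality_apply, map_snd_prodMk])

end ProductsOfPoints

variable {A : Type} [SmallCategory A] [HasFiniteProducts A]

instance (X : AMod A) : PreservesFiniteProducts X.obj := X.property.some

variable {M : AMod A}

theorem ext_app {T X : Over M} {f f' : T ⟶ X}
    (h : ∀ (b : A) (t : T.left.obj.obj b), f.left.hom.app b t = f'.left.hom.app b t) :
    f = f' := by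
  ext b t
  exact h b t

theorem app_over {T X : Over M} (f : T ⟶ X) {b : A} (t : T.left.obj.obj b) :
    X.hom.hom.app b (f.left.hom.app b t) = T.hom.hom.app b t :=
  types_congr_hom (NatTrans.congr_app (congrArg InducedCategory.Hom.hom (Over.w f)) b) t

variable (M)

def coyonedaModel (a : A) : AMod A :=
  ⟨coyoneda.obj (Opposite.op a), ⟨inferInstance⟩⟩

def coyonedaModelHom {a : A} (m : M.obj.obj a) : coyonedaModel a ⟶ M :=
  ObjectProperty.homMk
    { app := fun _ => TypeCat.ofHom fun f => M.obj.map f m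
      naturality := fun _ _ g => by
        ext f
        exact M.obj.map_comp_apply f g m }

/-- `A(a, -)` over `M` through `m ∈ M(a)`. By Yoneda, morphisms from it to `X` are the elements
of `X` over `m`; for an abelian group object `B` they form the fibre group of `B` over `m`. -/
def coyonedaOver {a : A} (m : M.obj.obj a) : Over M :=
  Over.mk (coyonedaModelHom M m)

variable {M}

def elem {a : A} {m : M.obj.obj a} {X : Over M} (φ : coyonedaOver M m ⟶ X) :
    X.left.obj.obj a :=
  φ.left.hom.app a (𝟙 a)

theorem app_eq_map_elem {a : A} {m : M.obj.obj a} {X : Over M} (φ : coyonedaOver M m ⟶ X)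
    {c : A} (f : a ⟶ c) : φ.left.hom.app c f = X.left.obj.map f (elem φ) := by
  rw [elem, ← NatTrans.naturality_apply φ.left.hom f (𝟙 a)]
  exact congrArg _ (Category.id_comp f).symm

theorem elem_over {a : A} {m : M.obj.obj a} {X : Over M} (φ : coyonedaOver M m ⟶ X) :
    X.hom.hom.app a (elem φ) = m :=
  (app_over φ (𝟙 a)).trans (M.obj.map_id_apply a m)

theorem hom_ext_elem {a : A} {m : M.obj.obj a} {X : Over M} {φ ψ : coyonedaOver M m ⟶ X}
    (h : elem φ = elem ψ) : φ = ψ :=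
  ext_app fun _ f => by rw [app_eq_map_elem φ f, app_eq_map_elem ψ f, h]

theorem elem_comp {a : A} {m : M.obj.obj a} {X X' : Over M} (φ : coyonedaOver M m ⟶ X)
    (ψ : X ⟶ X') : elem (φ ≫ ψ) = ψ.left.hom.app a (elem φ) :=
  rfl

def homOfElem {a : A} {m : M.obj.obj a} {X : Over M} (x : X.left.obj.obj a)
    (hx : X.hom.hom.app a x = m) : coyonedaOver M m ⟶ X :=
  Over.homMk
    (ObjectProperty.homMk
      { app := fun _ => TypeCat.ofHom fun f => X.left.obj.map f x
        naturality := fun _ _ g => by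
          ext f
          exact X.left.obj.map_comp_apply f g x })
    (by
      ext c f
      change X.hom.hom.app c (X.left.obj.map f x) = M.obj.map f m
      rw [← hx]
      exact NatTrans.naturality_apply X.hom.hom f x)

@[simp] theorem elem_homOfElem {a : A} {m : M.obj.obj a} {X : Over M} (x : X.left.obj.obj a)
    (hx : X.hom.hom.app a x = m) : elem (homOfElem x hx) = x :=
  X.left.obj.map_id_apply a x

theorem elem_homOfElem_comp {a : A} {m : M.obj.obj a} {X X' : Over M} (x : X.left.obj.obj a)
    (hx : X.hom.hom.app a x = m) (F : X ⟶ X') : elem (homOfElem x hx ≫ F) = F.left.hom.app a x := by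
  rw [elem_comp, elem_homOfElem]

theorem hom_ext_homOfElem {T X : Over M} {F F' : T ⟶ X}
    (h : ∀ (b : A) (t : T.left.obj.obj b), homOfElem t rfl ≫ F = homOfElem t rfl ≫ F') :
    F = F' :=
  ext_app fun b t => by rw [← elem_homOfElem_comp t rfl F, h, elem_homOfElem_comp]

def coyonedaOverMap {x b : A} (g : x ⟶ b) {m : M.obj.obj x} {n : M.obj.obj b}
    (h : M.obj.map g m = n) : coyonedaOver M n ⟶ coyonedaOver M m :=
  homOfElem (X := coyonedaOver M m) g h

@[simp] theorem elem_coyonedaOverMap_comp {x b : A} (g : x ⟶ b) {m : M.obj.obj x}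
    {n : M.obj.obj b} (h : M.obj.map g m = n) {X : Over M} (φ : coyonedaOver M m ⟶ X) :
    elem (coyonedaOverMap g h ≫ φ) = X.left.obj.map g (elem φ) := by
  rw [elem_comp]
  exact (congrArg (φ.left.hom.app b) (Category.comp_id g)).trans (app_eq_map_elem φ g)

section Fibers

variable (B : AbGroupObject (Over M))

theorem elem_zero {b : A} (n : M.obj.obj b) :
    elem (0 : coyonedaOver M n ⟶ B.pt) = (B.zero (Over.mk (𝟙 M))).left.hom.app b n := by
  rw [← AbGroupObject.zero_eq, ← B.zero_natural (homOfElem (X := Over.mk (𝟙 M)) (m := n) n rfl)]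
  exact (elem_comp _ _).trans (congrArg _ (elem_homOfElem _ _))

/-- The generator standing for `g_*(dm, 0_k)`, the partial differential of `g` in its first
variable at `(m, k)`, applied to `dm`. -/
structure Generator {b : A} (n : M.obj.obj b) where
  a : A
  c : A
  m : M.obj.obj a
  k : M.obj.obj c
  g : a ⨯ c ⟶ b
  map_g : M.obj.map g (prodMk M.obj m k) = n

namespace Generator

variable {b : A} {n : M.obj.obj b} (s : Over.mk (𝟙 M) ⟶ B.pt)

def evalPt (γ : Generator n) : B.pt.left.obj.obj b :=
  B.pt.left.obj.map γ.g
    (prodMk _ (s.left.hom.app γ.a γ.m) ((B.zero (Over.mk (𝟙 M))).left.hom.app γ.c γ.k))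

theorem evalPt_over (γ : Generator n) : B.pt.hom.hom.app b (γ.evalPt B s) = n := by
  rw [evalPt, NatTrans.naturality_apply, app_prodMk, app_over, app_over]
  exact γ.map_g

def eval (γ : Generator n) : coyonedaOver M n ⟶ B.pt :=
  homOfElem (γ.evalPt B s) (γ.evalPt_over B s)

end Generator

variable {b : A} {n : M.obj.obj b} (s : Over.mk (𝟙 M) ⟶ B.pt)

def evalFree : FreeAbelianGroup (Generator n) →+ (coyonedaOver M n ⟶ B.pt) :=
  FreeAbelianGroup.lift (Generator.eval B s)

variable (n) in
/-- The infimum ranges over the large type of all abelian group objects over `M`, but membership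
in it is a proposition, so the quotient by it is still a small group. -/
def relations : AddSubgroup (FreeAbelianGroup (Generator n)) :=
  ⨅ (B : AbGroupObject (Over M)) (s : Over.mk (𝟙 M) ⟶ B.pt), (evalFree B s).ker

theorem evalFree_eq_zero {x : FreeAbelianGroup (Generator n)} (hx : x ∈ relations n) :
    evalFree B s x = 0 :=
  AddSubgroup.mem_iInf.1 (AddSubgroup.mem_iInf.1 hx B) s

variable (n) in
def OmegaFiber : Type :=
  FreeAbelianGroup (Generator n) ⧸ relations n

instance : AddCommGroup (OmegaFiber n) :=
  QuotientAddGroup.Quotient.addCommGroup _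

namespace OmegaFiber

def mk : FreeAbelianGroup (Generator n) →+ OmegaFiber n :=
  QuotientAddGroup.mk' _

theorem mk_surjective : Function.Surjective (mk (n := n)) :=
  QuotientAddGroup.mk'_surjective _

theorem addMonoidHom_ext {G : Type*} [AddCommGroup G] {f f' : OmegaFiber n →+ G}
    (h : ∀ γ, f (mk (.of γ)) = f' (mk (.of γ))) : f = f' :=
  QuotientAddGroup.addMonoidHom_ext _ (FreeAbelianGroup.lift_ext (f.comp mk) (f'.comp mk) h)

def eval : OmegaFiber n →+ (coyonedaOver M n ⟶ B.pt) :=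
  QuotientAddGroup.lift _ (evalFree B s) fun _ => evalFree_eq_zero B s

def evalPt (w : OmegaFiber n) : B.pt.left.obj.obj b :=
  elem (eval B s w)

theorem ext {w w' : OmegaFiber n} (h : ∀ B s, eval B s w = eval B s w') : w = w' := by
  rw [← sub_eq_zero]
  obtain ⟨x, hx⟩ := mk_surjective (w - w')
  rw [← hx]
  refine (QuotientAddGroup.eq_zero_iff x).2 <| AddSubgroup.mem_iInf.2 fun B =>
    AddSubgroup.mem_iInf.2 fun s => ?_
  change eval B s (mk x) = 0
  rw [hx, map_sub, h, sub_self]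

theorem evalPt_over (w : OmegaFiber n) : B.pt.hom.hom.app b (evalPt B s w) = n :=
  elem_over _

theorem ext_evalPt {w w' : OmegaFiber n} (h : ∀ B s, evalPt B s w = evalPt B s w') : w = w' :=
  ext fun B s => hom_ext_elem (h B s)

theorem eval_mk (x : FreeAbelianGroup (Generator n)) : eval B s (mk x) = evalFree B s x :=
  rfl

@[simp] theorem evalPt_mk_of (γ : Generator n) : evalPt B s (mk (.of γ)) = γ.evalPt B s := by
  rw [evalPt, eval_mk, evalFree, FreeAbelianGroup.lift_apply_of]
  exact elem_homOfElem _ _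

@[simp] theorem evalPt_zero : evalPt B s (0 : OmegaFiber n) =
    (B.zero (Over.mk (𝟙 M))).left.hom.app b n := by
  rw [evalPt, map_zero, elem_zero]

end OmegaFiber

variable {b' : A} {n' : M.obj.obj b'}

def Generator.map (g' : b ⟶ b') (h : M.obj.map g' n = n') (γ : Generator n) : Generator n' :=
  { γ with
    g := γ.g ≫ g'
    map_g := by rw [M.obj.map_comp_apply, γ.map_g, h] }

theorem Generator.evalPt_map (g' : b ⟶ b') (h : M.obj.map g' n = n') (γ : Generator n) :
    (γ.map g' h).evalPt B s = B.pt.left.obj.map g' (γ.evalPt B s) :=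
  B.pt.left.obj.map_comp_apply _ _ _

theorem evalFree_map (g' : b ⟶ b') (h : M.obj.map g' n = n') (x : FreeAbelianGroup (Generator n)) :
    evalFree B s (FreeAbelianGroup.map (Generator.map g' h) x) =
      coyonedaOverMap g' h ≫ evalFree B s x := by
  suffices (evalFree B s).comp (FreeAbelianGroup.map (Generator.map g' h)) =
      (B.precomp (coyonedaOverMap g' h)).comp (evalFree B s) from DFunLike.congr_fun this x
  refine FreeAbelianGroup.lift_ext _ _ fun γ => hom_ext_elem ?_
  simp only [AddMonoidHom.comp_apply, FreeAbelianGroup.map_of_apply, evalFree,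
    FreeAbelianGroup.lift_apply_of, AbGroupObject.precomp_apply, elem_coyonedaOverMap_comp,
    Generator.eval, elem_homOfElem, Generator.evalPt_map]

namespace OmegaFiber

def map (g' : b ⟶ b') (h : M.obj.map g' n = n') : OmegaFiber n →+ OmegaFiber n' :=
  QuotientAddGroup.map _ _ (FreeAbelianGroup.map (Generator.map g' h)) fun x hx =>
    AddSubgroup.mem_iInf.2 fun B => AddSubgroup.mem_iInf.2 fun s => by
      rw [AddMonoidHom.mem_ker, evalFree_map, evalFree_eq_zero B s hx, AbGroupObject.comp_zero]

theorem map_mk (g' : b ⟶ b') (h : M.obj.map g' n = n') (x : FreeAbelianGroup (Generator n)) :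
    map g' h (mk x) = mk (FreeAbelianGroup.map (Generator.map g' h) x) :=
  rfl

theorem evalPt_map (g' : b ⟶ b') (h : M.obj.map g' n = n') (w : OmegaFiber n) :
    evalPt B s (map g' h w) = B.pt.left.obj.map g' (evalPt B s w) := by
  obtain ⟨x, rfl⟩ := mk_surjective w
  rw [evalPt, evalPt, map_mk, eval_mk, eval_mk, evalFree_map, elem_coyonedaOverMap_comp]

theorem map_map_of_comp_eq {b'' : A} {n'' : M.obj.obj b''} {g : b ⟶ b'} {g' : b' ⟶ b''}
    {g'' : b ⟶ b''} (hg : g ≫ g' = g'') (h : M.obj.map g n = n') (h' : M.obj.map g' n' = n'')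
    (h'' : M.obj.map g'' n = n'') (w : OmegaFiber n) : map g' h' (map g h w) = map g'' h'' w :=
  ext_evalPt fun B s => by
    rw [evalPt_map, evalPt_map, evalPt_map, ← hg, B.pt.left.obj.map_comp_apply]

def cast {n n' : M.obj.obj b} (h : n = n') : OmegaFiber n →+ OmegaFiber n' := by
  subst h
  exact AddMonoidHom.id _

theorem sigma_mk_cast {n n' : M.obj.obj b} (h : n = n') (w : OmegaFiber n) :
    (⟨n', cast h w⟩ : Σ n : M.obj.obj b, OmegaFiber n) = ⟨n, w⟩ := by
  subst h
  rfl

@[simp] theorem evalPt_cast {n n' : M.obj.obj b} (h : n = n') (w : OmegaFiber n) :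
    evalPt B s (cast h w) = evalPt B s w := by
  subst h
  rfl

end OmegaFiber

end Fibers

section Functor

theorem sigma_ext {b : A} {x y : Σ n : M.obj.obj b, OmegaFiber n}
    (h : ∀ B s, OmegaFiber.evalPt B s x.2 = OmegaFiber.evalPt B s y.2) : x = y := by
  obtain ⟨n, w⟩ := x
  obtain ⟨n', w'⟩ := y
  obtain rfl : n = n' := by
    -- the trivial group object on `M` itself evaluates elements to their base points
    rw [← OmegaFiber.evalPt_over (.ofIsTerminal Over.mkIdTerminal) (𝟙 _) w,
      ← OmegaFiber.evalPt_over (.ofIsTerminal Over.mkIdTerminal) (𝟙 _) w']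
    exact h _ _
  exact congrArg _ (OmegaFiber.ext_evalPt h)

variable (M)

def omegaFunctor : A ⥤ Type where
  obj b := Σ n : M.obj.obj b, OmegaFiber n
  map g := TypeCat.ofHom fun x => ⟨M.obj.map g x.1, OmegaFiber.map g rfl x.2⟩
  map_id b := by
    ext x : 3
    refine sigma_ext fun B s => (OmegaFiber.evalPt_map B s (𝟙 b) rfl x.2).trans ?_
    exact B.pt.left.obj.map_id_apply b _
  map_comp f g := by
    ext x : 3
    refine sigma_ext fun B s => (OmegaFiber.evalPt_map B s (f ≫ g) rfl x.2).trans ?_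
    refine (B.pt.left.obj.map_comp_apply f g _).trans ?_
    exact ((OmegaFiber.evalPt_map B s g rfl _).trans
      (congrArg _ (OmegaFiber.evalPt_map B s f rfl x.2))).symm

variable {M}

theorem omegaFunctor_map_mk {b b' : A} (g : b ⟶ b') {n : M.obj.obj b} {n' : M.obj.obj b'}
    (h : M.obj.map g n = n') (w : OmegaFiber n) :
    (omegaFunctor M).map g ⟨n, w⟩ = ⟨n', OmegaFiber.map g h w⟩ := by
  subst h
  rfl

def evalNatTrans (B : AbGroupObject (Over M)) (s : Over.mk (𝟙 M) ⟶ B.pt) :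
    omegaFunctor M ⟶ B.pt.left.obj where
  app b := TypeCat.ofHom fun x => OmegaFiber.evalPt B s x.2
  naturality _ _ g := by
    ext x
    exact OmegaFiber.evalPt_map B s g rfl x.2

theorem evalNatTrans_app (B : AbGroupObject (Over M)) (s : Over.mk (𝟙 M) ⟶ B.pt) {b : A}
    (x : (omegaFunctor M).obj b) : (evalNatTrans B s).app b x = OmegaFiber.evalPt B s x.2 :=
  rfl

end Functor

section Products

variable {b₁ b₂ : A}

/-- Adding `n₂` to the dummy variable of `γ` gives a generator over `(n₁, n₂)` that projects to
`γ` and to `0`. -/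
def Generator.inl {n₁ : M.obj.obj b₁} (n₂ : M.obj.obj b₂) (γ : Generator n₁) :
    Generator (prodMk M.obj n₁ n₂) where
  a := γ.a
  c := γ.c ⨯ b₂
  m := γ.m
  k := prodMk M.obj γ.k n₂
  g := prod.lift (prod.map (𝟙 _) prod.fst ≫ γ.g) (prod.snd ≫ prod.snd)
  map_g := by
    simp only [map_prod_lift, Functor.map_comp_apply, map_prod_map, map_fst_prodMk,
      map_snd_prodMk, Functor.map_id_apply, γ.map_g]

theorem Generator.evalPt_inl (B : AbGroupObject (Over M)) (s : Over.mk (𝟙 M) ⟶ B.pt)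
    {n₁ : M.obj.obj b₁} (n₂ : M.obj.obj b₂) (γ : Generator n₁) :
    (γ.inl n₂).evalPt B s =
      prodMk _ (γ.evalPt B s) ((B.zero (Over.mk (𝟙 M))).left.hom.app b₂ n₂) := by
  change B.pt.left.obj.map (prod.lift (prod.map (𝟙 γ.a) prod.fst ≫ γ.g) (prod.snd ≫ prod.snd))
      (prodMk _ (s.left.hom.app γ.a γ.m)
        ((B.zero (Over.mk (𝟙 M))).left.hom.app _ (prodMk (Over.mk (𝟙 M)).left.obj γ.k n₂))) = _
  rw [map_prod_lift, app_prodMk, Functor.map_comp_apply, Functor.map_comp_apply, map_prod_map,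
    map_snd_prodMk, map_snd_prodMk, map_fst_prodMk, Functor.map_id_apply]
  rfl

theorem OmegaFiber.exists_map_fst_eq_and_map_snd_eq_zero {n₁ : M.obj.obj b₁}
    (n₂ : M.obj.obj b₂) (w : OmegaFiber n₁) :
    ∃ w' : OmegaFiber (prodMk M.obj n₁ n₂), map prod.fst (map_fst_prodMk _ _ _) w' = w ∧
      map prod.snd (map_snd_prodMk _ _ _) w' = 0 := by
  obtain ⟨x, rfl⟩ := mk_surjective w
  refine ⟨mk (FreeAbelianGroup.map (Generator.inl n₂) x), ?_, ?_⟩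
  · refine DFunLike.congr_fun (FreeAbelianGroup.lift_ext
      ((map _ _).comp (mk.comp (FreeAbelianGroup.map (Generator.inl n₂)))) mk fun γ => ?_) x
    refine ext_evalPt fun B s => ?_
    simp only [AddMonoidHom.comp_apply, FreeAbelianGroup.map_of_apply, map_mk, evalPt_mk_of,
      Generator.evalPt_map, Generator.evalPt_inl, map_fst_prodMk]
  · refine DFunLike.congr_fun (FreeAbelianGroup.lift_ext
      ((map _ _).comp (mk.comp (FreeAbelianGroup.map (Generator.inl n₂)))) 0 fun γ => ?_) x
    refine ext_evalPt fun B s => ?_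
    simp only [AddMonoidHom.comp_apply, FreeAbelianGroup.map_of_apply, map_mk, evalPt_mk_of,
      Generator.evalPt_map, Generator.evalPt_inl, map_snd_prodMk, AddMonoidHom.zero_apply,
      evalPt_zero]

variable (M) in
theorem bijective_omegaFunctor_map_fst_map_snd (b₁ b₂ : A) :
    Function.Bijective fun x : (omegaFunctor M).obj (b₁ ⨯ b₂) =>
      ((omegaFunctor M).map prod.fst x, (omegaFunctor M).map prod.snd x) := by
  constructor
  · intro x y hxy
    obtain ⟨h₁, h₂⟩ := Prod.mk.inj hxy
    refine sigma_ext fun B s => prod_ext B.pt.left.obj ?_ ?_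
    · rw [← evalNatTrans_app, ← evalNatTrans_app, ← NatTrans.naturality_apply,
        ← NatTrans.naturality_apply, h₁]
    · rw [← evalNatTrans_app, ← evalNatTrans_app, ← NatTrans.naturality_apply,
        ← NatTrans.naturality_apply, h₂]
  · rintro ⟨⟨n₁, w₁⟩, ⟨n₂, w₂⟩⟩
    obtain ⟨u, hu₁, hu₂⟩ := OmegaFiber.exists_map_fst_eq_and_map_snd_eq_zero n₂ w₁
    obtain ⟨v, hv₁, hv₂⟩ := OmegaFiber.exists_map_fst_eq_and_map_snd_eq_zero n₁ w₂
    have hσ : M.obj.map (prod.lift prod.snd prod.fst) (prodMk M.obj n₂ n₁) =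
        prodMk M.obj n₁ n₂ := by
      rw [map_prod_lift, map_fst_prodMk, map_snd_prodMk]
    refine ⟨⟨prodMk M.obj n₁ n₂, u + OmegaFiber.map _ hσ v⟩, ?_⟩
    dsimp only
    rw [omegaFunctor_map_mk _ (map_fst_prodMk _ _ _),
      omegaFunctor_map_mk _ (map_snd_prodMk _ _ _), map_add, map_add,
      OmegaFiber.map_map_of_comp_eq (prod.lift_fst _ _) _ _ (map_snd_prodMk _ _ _),
      OmegaFiber.map_map_of_comp_eq (prod.lift_snd _ _) _ _ (map_fst_prodMk _ _ _),
      hu₁, hu₂, hv₁, hv₂, add_zero, zero_add]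

instance : Unique ((omegaFunctor M).obj (⊤_ A)) where
  default := ⟨default, 0⟩
  uniq _ := sigma_ext fun _ _ => Subsingleton.elim _ _

end Products

variable (M)

def omegaModel : AMod A :=
  ⟨omegaFunctor M, ⟨preservesFiniteProducts_of_bijective _
    (bijective_omegaFunctor_map_fst_map_snd M)⟩⟩

def omegaProj : omegaModel M ⟶ M :=
  ObjectProperty.homMk
    { app _ := TypeCat.ofHom Sigma.fst
      naturality _ _ _ := rfl }

def omegaOver : Over M :=
  Over.mk (omegaProj M)

section GroupStructure

variable {M} {T T' : Over M}

theorem map_hom_app (T : Over M) {b b' : A} (g : b ⟶ b') (t : T.left.obj.obj b) :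
    M.obj.map g (T.hom.hom.app b t) = T.hom.hom.app b' (T.left.obj.map g t) :=
  (NatTrans.naturality_apply T.hom.hom g t).symm

def fiberOf (f : T ⟶ omegaOver M) {b : A} (t : T.left.obj.obj b) :
    OmegaFiber (T.hom.hom.app b t) :=
  OmegaFiber.cast (app_over f t) (f.left.hom.app b t).2

theorem sigma_mk_fiberOf (f : T ⟶ omegaOver M) {b : A} (t : T.left.obj.obj b) :
    (⟨T.hom.hom.app b t, fiberOf f t⟩ : (omegaFunctor M).obj b) = f.left.hom.app b t :=
  OmegaFiber.sigma_mk_cast _ _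

theorem evalPt_fiberOf (B : AbGroupObject (Over M)) (s : Over.mk (𝟙 M) ⟶ B.pt)
    (f : T ⟶ omegaOver M) {b : A} (t : T.left.obj.obj b) :
    OmegaFiber.evalPt B s (fiberOf f t) = OmegaFiber.evalPt B s (f.left.hom.app b t).2 :=
  OmegaFiber.evalPt_cast _ _ _ _

theorem map_fiberOf (f : T ⟶ omegaOver M) {b b' : A} (g : b ⟶ b') (t : T.left.obj.obj b) :
    OmegaFiber.map g (map_hom_app T g t) (fiberOf f t) = fiberOf f (T.left.obj.map g t) :=
  OmegaFiber.ext_evalPt fun B s => by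
    rw [OmegaFiber.evalPt_map, evalPt_fiberOf, evalPt_fiberOf]
    exact (NatTrans.naturality_apply (evalNatTrans B s) g _).symm.trans
      (congrArg ((evalNatTrans B s).app _) (NatTrans.naturality_apply f.left.hom g t).symm)

theorem fiberOf_comp (h : T ⟶ T') (f : T' ⟶ omegaOver M) {b : A} (t : T.left.obj.obj b) :
    fiberOf (h ≫ f) t = OmegaFiber.cast (app_over h t) (fiberOf f (h.left.hom.app b t)) :=
  OmegaFiber.ext_evalPt fun B s => by
    rw [OmegaFiber.evalPt_cast, evalPt_fiberOf, evalPt_fiberOf]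
    rfl

def homOfFibers (φ : ∀ {b : A} (t : T.left.obj.obj b), OmegaFiber (T.hom.hom.app b t))
    (hφ : ∀ {b b' : A} (g : b ⟶ b') (t : T.left.obj.obj b),
      OmegaFiber.map g (map_hom_app T g t) (φ t) = φ (T.left.obj.map g t)) :
    T ⟶ omegaOver M :=
  Over.homMk
    (ObjectProperty.homMk
      { app _ := TypeCat.ofHom fun t => ⟨T.hom.hom.app _ t, φ t⟩
        naturality _ _ g := by
          ext t
          exact ((omegaFunctor_map_mk g _ (φ t)).trans (congrArg _ (hφ g t))).symm })
    (by ext; rfl)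

theorem hom_ext_fiberOf {f f' : T ⟶ omegaOver M}
    (h : ∀ (b : A) (t : T.left.obj.obj b), fiberOf f t = fiberOf f' t) : f = f' :=
  ext_app fun b t => by rw [← sigma_mk_fiberOf f t, ← sigma_mk_fiberOf f' t, h]

variable (M) in
def omega : AbGroupObject (Over M) where
  pt := omegaOver M
  add f f' := homOfFibers (fun t => fiberOf f t + fiberOf f' t) fun g t => by
    rw [map_add, map_fiberOf, map_fiberOf]
  zero _ := homOfFibers (fun _ => 0) fun _ _ => map_zero _
  neg f := homOfFibers (fun t => -fiberOf f t) fun g t => by rw [map_neg, map_fiberOf]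
  add_assoc _ _ _ := hom_ext_fiberOf fun _ _ => add_assoc _ _ _
  add_comm _ _ := hom_ext_fiberOf fun _ _ => add_comm _ _
  zero_add _ := hom_ext_fiberOf fun _ _ => zero_add _
  neg_add_cancel _ := hom_ext_fiberOf fun _ _ => neg_add_cancel _
  add_natural h f f' := hom_ext_fiberOf fun _ t => by
    change fiberOf (h ≫ _) t = fiberOf (h ≫ f) t + fiberOf (h ≫ f') t
    rw [fiberOf_comp, fiberOf_comp, fiberOf_comp]
    exact map_add _ _ _
  zero_natural h := hom_ext_fiberOf fun _ t => by
    change fiberOf (h ≫ _) t = 0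
    rw [fiberOf_comp]
    exact map_zero _

end GroupStructure

section UniversalProperty

variable {M} (B : AbGroupObject (Over M)) (s : Over.mk (𝟙 M) ⟶ B.pt)

/-- The differential `dm`, as the generator `prod.fst_*(dm, 0_m)`. -/
def OmegaFiber.d {a : A} (m : M.obj.obj a) : OmegaFiber m :=
  mk (.of ⟨a, a, m, m, prod.fst, map_fst_prodMk _ _ _⟩)

theorem OmegaFiber.evalPt_d {a : A} (m : M.obj.obj a) : evalPt B s (d m) = s.left.hom.app a m := by
  rw [d, evalPt_mk_of]
  exact map_fst_prodMk _ _ _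

variable (M) in
def universalDerivation : Over.mk (𝟙 M) ⟶ omegaOver M :=
  homOfFibers (T := Over.mk (𝟙 M)) (fun m => OmegaFiber.d (M := M) m) fun g m =>
    OmegaFiber.ext_evalPt fun B s => (OmegaFiber.evalPt_map B s g _ _).trans <|
      (congrArg _ (OmegaFiber.evalPt_d B s m)).trans <|
        (NatTrans.naturality_apply s.left.hom g m).symm.trans (OmegaFiber.evalPt_d B s _).symm

def descHom : omegaOver M ⟶ B.pt :=
  Over.homMk (ObjectProperty.homMk (evalNatTrans B s)) (by
    ext b x
    exact OmegaFiber.evalPt_over B s x.2)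

theorem universalDerivation_comp_descHom : universalDerivation M ≫ descHom B s = s :=
  ext_app fun _ m => OmegaFiber.evalPt_d B s m

theorem homOfElem_comp_descHom {T : Over M} (f : T ⟶ (omega M).pt) {b : A}
    (t : T.left.obj.obj b) :
    homOfElem t rfl ≫ f ≫ descHom B s = OmegaFiber.eval B s (fiberOf f t) :=
  hom_ext_elem <| (elem_homOfElem_comp t rfl _).trans (evalPt_fiberOf B s f t).symm

def desc : AbHom (omega M) B :=
  ⟨descHom B s, fun f g => hom_ext_homOfElem fun b t => by
    refine (homOfElem_comp_descHom B s ((omega M).add f g) t).trans ?_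
    rw [AbGroupObject.add_eq B, AbGroupObject.comp_add, homOfElem_comp_descHom,
      homOfElem_comp_descHom]
    exact map_add _ _ _⟩

section Uniqueness

variable {b : A} {n : M.obj.obj b}

def toOmega (w : OmegaFiber n) : coyonedaOver M n ⟶ omegaOver M :=
  homOfFibers (T := coyonedaOver M n) (fun f => OmegaFiber.map f rfl w)
    fun _ _ => OmegaFiber.map_map_of_comp_eq rfl _ _ _ w

theorem toOmega_add (u v : OmegaFiber n) :
    toOmega (u + v) = (omega M).add (toOmega u) (toOmega v) :=
  hom_ext_fiberOf fun _ f => by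
    change OmegaFiber.map f rfl (u + v) = OmegaFiber.map f rfl u + OmegaFiber.map f rfl v
    exact map_add _ _ _

theorem elem_toOmega (w : OmegaFiber n) : elem (toOmega w) = (⟨n, w⟩ : (omegaFunctor M).obj b) :=
  (omegaFunctor M).map_id_apply b ⟨n, w⟩

def Generator.tautological {a c : A} (m : M.obj.obj a) (k : M.obj.obj c) :
    Generator (prodMk M.obj m k) :=
  ⟨a, c, m, k, 𝟙 _, Functor.map_id_apply _ _ _⟩

theorem app_mk_of (φ : AbHom (omega M) B) (γ : Generator n) :
    φ.1.left.hom.app b (⟨n, OmegaFiber.mk (.of γ)⟩ : (omegaFunctor M).obj b) =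
      γ.evalPt B (universalDerivation M ≫ φ.1) := by
  obtain ⟨a, c, m, k, g, hg⟩ := γ
  let x : (omegaFunctor M).obj (a ⨯ c) :=
    ⟨prodMk M.obj m k, OmegaFiber.mk (.of (.tautological m k))⟩
  have hx : (omegaFunctor M).map g x = ⟨n, OmegaFiber.mk (.of ⟨a, c, m, k, g, hg⟩)⟩ := by
    rw [omegaFunctor_map_mk g hg]
    refine congrArg _ (OmegaFiber.ext_evalPt fun B s => ?_)
    rw [OmegaFiber.evalPt_map, OmegaFiber.evalPt_mk_of, OmegaFiber.evalPt_mk_of]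
    exact congrArg _ (Functor.map_id_apply _ _ _)
  have hfst : (omegaFunctor M).map prod.fst x = ⟨m, OmegaFiber.d m⟩ := by
    rw [omegaFunctor_map_mk _ (map_fst_prodMk _ _ _)]
    refine congrArg _ (OmegaFiber.ext_evalPt fun B s => ?_)
    rw [OmegaFiber.evalPt_map, OmegaFiber.evalPt_mk_of, OmegaFiber.evalPt_d]
    exact (congrArg _ (Functor.map_id_apply _ _ _)).trans (map_fst_prodMk _ _ _)
  have hsnd : (omegaFunctor M).map prod.snd x = ⟨k, 0⟩ := by
    rw [omegaFunctor_map_mk _ (map_snd_prodMk _ _ _)]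
    refine congrArg _ (OmegaFiber.ext_evalPt fun B s => ?_)
    rw [OmegaFiber.evalPt_map, OmegaFiber.evalPt_mk_of, OmegaFiber.evalPt_zero]
    exact (congrArg _ (Functor.map_id_apply _ _ _)).trans (map_snd_prodMk _ _ _)
  have hzero : φ.1.left.hom.app c (⟨k, 0⟩ : (omegaFunctor M).obj c) =
      (B.zero (Over.mk (𝟙 M))).left.hom.app c k :=
    congrArg (fun F => F.left.hom.app c k) (φ.zero_comp (Over.mk (𝟙 M)))
  have hprod : φ.1.left.hom.app _ x = prodMk _ ((universalDerivation M ≫ φ.1).left.hom.app a m)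
      ((B.zero (Over.mk (𝟙 M))).left.hom.app c k) :=
    eq_prodMk _ ((NatTrans.naturality_apply φ.1.left.hom _ x).symm.trans (congrArg _ hfst))
      ((NatTrans.naturality_apply φ.1.left.hom _ x).symm.trans ((congrArg _ hsnd).trans hzero))
  exact (congrArg _ hx.symm).trans ((NatTrans.naturality_apply φ.1.left.hom g x).trans
    (congrArg _ hprod))

theorem eval_eq_toOmega_comp (φ : AbHom (omega M) B) (w : OmegaFiber n) :
    OmegaFiber.eval B (universalDerivation M ≫ φ.1) w = toOmega w ≫ φ.1 := by
  refine DFunLike.congr_fun (OmegaFiber.addMonoidHom_ext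
    (f' := (φ.postcomp _).comp (AddMonoidHom.mk' toOmega toOmega_add))
    fun γ => hom_ext_elem ?_) w
  exact (OmegaFiber.evalPt_mk_of B _ γ).trans
    ((app_mk_of B φ γ).symm.trans (congrArg _ (elem_toOmega _).symm))

end Uniqueness

theorem descHom_universalDerivation_comp (φ : AbHom (omega M) B) :
    descHom B (universalDerivation M ≫ φ.1) = φ.1 :=
  ext_app fun _ x => by
    change elem (OmegaFiber.eval B _ x.2) = _
    rw [eval_eq_toOmega_comp]
    exact (elem_comp _ _).trans (congrArg _ (elem_toOmega x.2))

def derivationEquiv : AbHom (omega M) B ≃ (Over.mk (𝟙 M) ⟶ B.pt) where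
  toFun φ := universalDerivation M ≫ φ.1
  invFun s := desc B s
  left_inv φ := Subtype.ext (descHom_universalDerivation_comp B φ)
  right_inv s := universalDerivation_comp_descHom B s

theorem derivationEquiv_apply (φ : AbHom (omega M) B) :
    derivationEquiv B φ = universalDerivation M ≫ φ.1 :=
  rfl

end UniversalProperty

end ModelDifferentials

end

/-- **Representability of derivations.**  For a theory `A` and a model `M`, the
functor `B ↦ Der(M;B)` of sections `M → B` on abelian group objects `B` of
`A-mod/M` is representable: there is an abelian group object `Ω¹_M` with
`Hom(Ω¹_M, B) ≅ Der(M;B)` naturally in `B` (an isomorphism of abelian groups,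
where `Der(M;B)` is the group of morphisms from the terminal object `id : M → M`
of `A-mod/M` to `B`). -/
theorem stmt17 {A : Type} [SmallCategory A] [HasFiniteProducts A] (M : AMod A) :
    ∃ (Ω : AbGroupObject (Over M))
      (e : ∀ B : AbGroupObject (Over M), AbHom Ω B ≃ (Over.mk (𝟙 M) ⟶ B.pt)),
      (∀ (B B' : AbGroupObject (Over M)) (ψ : AbHom B B') (φ : AbHom Ω B),
        e B' (φ.comp ψ) = e B φ ≫ ψ.1) ∧
      (∀ (B : AbGroupObject (Over M)) (φ φ' : AbHom Ω B),
        ∃ χ : AbHom Ω B, χ.1 = B.add φ.1 φ'.1 ∧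
          e B χ = B.add (e B φ) (e B φ')) := by
  refine ⟨ModelDifferentials.omega M, ModelDifferentials.derivationEquiv, fun B B' ψ φ => ?_,
    fun B φ φ' => ⟨φ.add φ', rfl, ?_⟩⟩
  · simp only [ModelDifferentials.derivationEquiv_apply]
    exact (Category.assoc _ _ _).symm
  · simp only [ModelDifferentials.derivationEquiv_apply]
    exact B.add_natural _ _ _
end
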